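/- If J is an r-shallow minor of a graph G, and every junction-free subgraph of J (with respect to a fixed orientation of G with all in-degrees ≤ d and a fixed representing collection of paths each with at most 2r+2 vertices) has edge density at most t, then J has edge density at most e·t·((2r+2)d + 1). -/

import Mathlib

/-- `S` is an `r`-shallow model of `J` in `G`. -/
def ShallowModel {V W : Type*} (r : ℕ) (J : SimpleGraph W) (G : SimpleGraph V)
    (S : W → Set V) : Prop :=
  (∀ i, ∃ c : S i, ∀ w : S i, ∃ p : (G.induce (S i)).Walk c w, p.length ≤ r) ∧
  (Pairwise fun i j => Disjoint (S i) (S j)) ∧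
  (∀ i j, J.Adj i j → ∃ u ∈ S i, ∃ v ∈ S j, G.Adj u v)

/-!
Keep every vertex of `J` independently with probability `p = 1/(k+1)`, where `k = (2r+2)d`
bounds the number of branch sets `S ℓ` that can witness a junction at an edge `ij`: each of the
at most `2r+2` vertices of `Q i j` has at most `d` in-neighbours, and disjoint branch sets need
distinct ones. From the sampled set `A`, keep the edges `ij ⊆ A` for which `A` contains no
witness; this subgraph is junction-free, so it has at most `t·|A|` edges. Each edge survives
with probability at least `p²(1-p)^k` and `E|A| = p|W|`, so
`|E(J)| ≤ t|W| / (p(1-p)^k) ≤ e·t·(k+1)·|W|`, using `(1 + 1/k)^k ≤ e`.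
-/

open Finset

section Sampling

variable {α : Type*} [Fintype α] [DecidableEq α]

/-- The probability of obtaining `A` when every element is kept independently with
probability `p`. -/
def bernoulliWeight (p : ℝ) (A : Finset α) : ℝ := p ^ #A * (1 - p) ^ #Aᶜ

theorem sum_bernoulliWeight_of_subset_of_disjoint (p : ℝ) {T R : Finset α}
    (hTR : Disjoint T R) :
    ∑ A with T ⊆ A ∧ Disjoint A R, bernoulliWeight p A = p ^ #T * (1 - p) ^ #R := by
  -- expand `∏ i, (f i + g i)`; the zero factors kill every `A` with `T ⊄ A` or `A ∩ R ≠ ∅`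
  have key := Fintype.prod_add (fun i => if i ∈ R then 0 else p)
    (fun i => if i ∈ T then 0 else 1 - p)
  have hfactor : ∀ i, ((if i ∈ R then 0 else p) + if i ∈ T then 0 else 1 - p)
      = (if i ∈ T then p else 1) * if i ∈ R then 1 - p else 1 := by
    intro i
    by_cases hT : i ∈ T
    · simp [hT, disjoint_left.mp hTR hT]
    · by_cases hR : i ∈ R <;> simp [hT, hR]
  simp_rw [hfactor, prod_mul_distrib, Fintype.prod_ite_mem, prod_const] at key
  rw [key, sum_filter]
  refine Fintype.sum_congr _ _ fun A => ?_
  simp_rw [← ite_not (_ ∈ R), ← ite_not (_ ∈ T), prod_ite_zero, prod_const]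
  have hR : (∀ i ∈ A, i ∉ R) ↔ Disjoint A R := disjoint_left.symm
  have hT : (∀ i ∈ Aᶜ, i ∉ T) ↔ T ⊆ A := by
    simp only [mem_compl, not_imp_not, subset_iff]
  simp only [hR, hT, ite_zero_mul_ite_zero, and_comm, bernoulliWeight]

theorem sum_bernoulliWeight_mul_card (p : ℝ) :
    ∑ A : Finset α, bernoulliWeight p A * #A = p * Fintype.card α := by
  calc ∑ A : Finset α, bernoulliWeight p A * #A
      = ∑ A : Finset α, ∑ v, if v ∈ A then bernoulliWeight p A else 0 := by
        simp [mul_comm]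
    _ = ∑ v : α, ∑ A with v ∈ A, bernoulliWeight p A := by
        rw [sum_comm]; simp only [sum_filter]
    _ = ∑ _v : α, p := Fintype.sum_congr _ _ fun v => by
        simpa using sum_bernoulliWeight_of_subset_of_disjoint p (disjoint_empty_right {v})
    _ = p * Fintype.card α := by simp [mul_comm]

theorem one_le_exp_one_mul_one_sub_inv_pow (k : ℕ) :
    1 ≤ Real.exp 1 * (1 - ((k : ℝ) + 1)⁻¹) ^ k := by
  have hbase : ((1 + (k : ℝ)⁻¹) * (1 - ((k : ℝ) + 1)⁻¹)) ^ k = 1 := by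
    rcases k.eq_zero_or_pos with rfl | hk
    · simp
    · have : (k : ℝ) ≠ 0 := by positivity
      rw [show (1 + (k : ℝ)⁻¹) * (1 - ((k : ℝ) + 1)⁻¹) = 1 by field_simp; ring, one_pow]
  calc 1 = (1 + (k : ℝ)⁻¹) ^ k * (1 - ((k : ℝ) + 1)⁻¹) ^ k := by rw [← mul_pow, hbase]
    _ ≤ Real.exp 1 * (1 - ((k : ℝ) + 1)⁻¹) ^ k := by
      have hq : 0 ≤ 1 - ((k : ℝ) + 1)⁻¹ := sub_nonneg.2 (inv_le_one_of_one_le₀ (by simp))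
      gcongr
      exact Real.one_add_inv_pow_le_exp

theorem card_le_exp_one_mul_of_sampling {ι : Type*} (E : Finset ι) (T R : ι → Finset α)
    (k : ℕ) (t : ℝ) (hT : ∀ e ∈ E, #(T e) ≤ 2) (hR : ∀ e ∈ E, #(R e) ≤ k)
    (hTR : ∀ e ∈ E, Disjoint (T e) (R e))
    (hdens : ∀ A : Finset α, (#{e ∈ E | T e ⊆ A ∧ Disjoint A (R e)} : ℝ) ≤ t * #A) :
    (#E : ℝ) ≤ Real.exp 1 * t * (k + 1) * Fintype.card α := by
  set p : ℝ := ((k : ℝ) + 1)⁻¹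
  have hp0 : 0 < p := by positivity
  have hp1 : p ≤ 1 := inv_le_one_of_one_le₀ (by linarith [k.cast_nonneg (α := ℝ)])
  have hq0 : 0 ≤ 1 - p := by linarith
  have hw : ∀ A : Finset α, 0 ≤ bernoulliWeight p A := fun A => by
    unfold bernoulliWeight; positivity
  have hevent : ∀ e ∈ E, p ^ 2 * (1 - p) ^ k
      ≤ ∑ A with T e ⊆ A ∧ Disjoint A (R e), bernoulliWeight p A := by
    intro e he
    rw [sum_bernoulliWeight_of_subset_of_disjoint p (hTR e he)]
    exact mul_le_mul (pow_le_pow_of_le_one hp0.le hp1 (hT e he))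
      (pow_le_pow_of_le_one hq0 (by linarith) (hR e he)) (by positivity) (by positivity)
  have hexpected : #E * (p ^ 2 * (1 - p) ^ k) ≤ t * (p * Fintype.card α) := calc
    #E * (p ^ 2 * (1 - p) ^ k)
        ≤ ∑ e ∈ E, ∑ A with T e ⊆ A ∧ Disjoint A (R e), bernoulliWeight p A := by
      rw [← nsmul_eq_mul]; exact card_nsmul_le_sum _ _ _ hevent
    _ = ∑ A, bernoulliWeight p A * #{e ∈ E | T e ⊆ A ∧ Disjoint A (R e)} := by
      simp_rw [sum_filter]; rw [sum_comm]
      simp [← sum_filter, mul_comm]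
    _ ≤ ∑ A, bernoulliWeight p A * (t * #A) := by
      gcongr with A
      · exact hw A
      · exact hdens A
    _ = t * (p * Fintype.card α) := by
      rw [← sum_bernoulliWeight_mul_card, mul_sum]
      exact Fintype.sum_congr _ _ fun A => by ring
  have hpk : p * ((k : ℝ) + 1) = 1 := inv_mul_cancel₀ (by positivity)
  calc (#E : ℝ) ≤ #E * (Real.exp 1 * (1 - p) ^ k) :=
        le_mul_of_one_le_right (by positivity) (one_le_exp_one_mul_one_sub_inv_pow k)
    _ = Real.exp 1 * (#E * (p ^ 2 * (1 - p) ^ k)) * ((k : ℝ) + 1) ^ 2 := by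
        linear_combination (-(Real.exp 1) * #E * (1 - p) ^ k * (p * ((k : ℝ) + 1) + 1)) * hpk
    _ ≤ Real.exp 1 * (t * (p * Fintype.card α)) * ((k : ℝ) + 1) ^ 2 := by gcongr
    _ = Real.exp 1 * t * (k + 1) * Fintype.card α := by
        linear_combination (Real.exp 1 * t * Fintype.card α * ((k : ℝ) + 1)) * hpk

end Sampling

namespace SimpleGraph

variable {W : Type*} (J : SimpleGraph W)

def avoidingSubgraph (R : Sym2 W → Finset W) (A : Finset W) : J.Subgraph where
  verts := A
  Adj i j := J.Adj i j ∧ i ∈ A ∧ j ∈ A ∧ Disjoint A (R s(i, j))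
  adj_sub h := h.1
  edge_vert h := h.2.1
  symm := ⟨fun _ _ h => ⟨h.1.symm, h.2.2.1, h.2.1, Sym2.eq_swap ▸ h.2.2.2⟩⟩

@[simp]
theorem avoidingSubgraph_verts (R : Sym2 W → Finset W) (A : Finset W) :
    (J.avoidingSubgraph R A).verts = A := rfl

theorem mem_edgeSet_avoidingSubgraph [DecidableEq W] {R : Sym2 W → Finset W} {A : Finset W}
    {e : Sym2 W} :
    e ∈ (J.avoidingSubgraph R A).edgeSet ↔
      e ∈ J.edgeSet ∧ e.toFinset ⊆ A ∧ Disjoint A (R e) := by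
  induction e using Sym2.ind with
  | _ i j => simp [avoidingSubgraph, Sym2.toFinset_mk_eq, insert_subset_iff, and_assoc]

theorem ncard_edgeSet_le_of_avoidingSubgraph [Fintype W] [DecidableEq W]
    (R : Sym2 W → Finset W) (k : ℕ) (t : ℝ)
    (hR : ∀ e ∈ J.edgeSet, #(R e) ≤ k) (hRe : ∀ e ∈ J.edgeSet, ∀ v ∈ e, v ∉ R e)
    (hdens : ∀ A : Finset W, A.Nonempty →
      ((J.avoidingSubgraph R A).edgeSet.ncard : ℝ) ≤ t * #A) :
    (J.edgeSet.ncard : ℝ) ≤ Real.exp 1 * t * (k + 1) * Fintype.card W := by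
  classical
  rw [Set.ncard_eq_toFinset_card']
  refine card_le_exp_one_mul_of_sampling _ Sym2.toFinset R k t
    (fun e _ => by rw [Sym2.card_toFinset]; split_ifs <;> omega)
    (fun e he => hR e (by simpa using he))
    (fun e he => Finset.disjoint_left.2 fun v hv => hRe e (by simpa using he) v (by simpa using hv))
    fun A => ?_
  rcases A.eq_empty_or_nonempty with rfl | hA
  · simp
  convert hdens A hA using 2
  rw [Set.ncard_eq_toFinset_card']
  congr 1
  ext e
  simp [mem_edgeSet_avoidingSubgraph]

end SimpleGraph

theorem ncard_setOf_meets_inNeighbourhood_le {V ι : Type*} [Finite V] [Finite ι]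
    {D : V → V → Prop} {d : ℕ} (hin : ∀ v, {u | D u v}.ncard ≤ d)
    {S : ι → Set V} (hS : Pairwise fun i j => Disjoint (S i) (S j)) (B : Set V) :
    {ℓ | ∃ a ∈ S ℓ, ∃ b ∈ B, D a b}.ncard ≤ B.ncard * d := by
  classical
  have := Fintype.ofFinite V
  have := Fintype.ofFinite ι
  calc {ℓ | ∃ a ∈ S ℓ, ∃ b ∈ B, D a b}.ncard
      ≤ #(B.toFinset.biUnion fun b => {u | D u b}.toFinset) := by
        rw [Set.ncard_eq_toFinset_card']
        refine card_le_card_of_forall_subsingleton (fun ℓ a => a ∈ S ℓ) (fun ℓ hℓ => ?_)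
          fun a _ ℓ hℓ ℓ' hℓ' => hS.eq (Set.not_disjoint_iff.2 ⟨a, hℓ.2, hℓ'.2⟩)
        obtain ⟨a, ha, b, hb, hab⟩ := by simpa using hℓ
        exact ⟨a, by simpa using ⟨b, hb, hab⟩, ha⟩
    _ ≤ B.toFinset.card * d := card_biUnion_le_card_mul _ _ _ fun b _ => by
        rw [← Set.ncard_eq_toFinset_card']; exact hin b
    _ = B.ncard * d := by rw [Set.ncard_eq_toFinset_card']

theorem stmt16_general {V W : Type*} [Fintype V] [Fintype W]
    (G : SimpleGraph V) (J : SimpleGraph W) (r d : ℕ) (t : ℝ)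
    (D : V → V → Prop)
    (hin : ∀ v, {u | D u v}.ncard ≤ d)
    (S : W → Set V) (hS : ShallowModel r J G S)
    (Q : W → W → Set V) (hQsymm : ∀ i j, Q i j = Q j i)
    (hQcard : ∀ i j, J.Adj i j → (Q i j).ncard ≤ 2 * r + 2)
    (hfree : ∀ J' : J.Subgraph,
      (∀ a b i j ℓ, J'.Adj i j → D a b → b ∈ Q i j → ℓ ∈ J'.verts →
        ℓ ≠ i → ℓ ≠ j → a ∉ S ℓ) →
      J'.verts.Nonempty → (J'.edgeSet.ncard : ℝ) ≤ t * J'.verts.ncard) :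
    (J.edgeSet.ncard : ℝ) ≤
      Real.exp 1 * t * (((2 * r + 2) * d : ℕ) + 1) * Fintype.card W := by
  classical
  let path : Sym2 W → Set V := Sym2.lift ⟨Q, hQsymm⟩
  -- the paper's `R_ij`: the branch sets other than `S i, S j` sending an arc into `Q i j`
  let junctions : Sym2 W → Finset W := fun e =>
    {ℓ | ℓ ∉ e ∧ ∃ a ∈ S ℓ, ∃ b ∈ path e, D a b}.toFinset
  refine J.ncard_edgeSet_le_of_avoidingSubgraph junctions _ t (fun e he => ?_)
    (fun e _ v hv => by simp [junctions, hv]) fun A hA => ?_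
  · induction e using Sym2.ind with
    | _ i j =>
      calc #(junctions s(i, j)) ≤ {ℓ | ∃ a ∈ S ℓ, ∃ b ∈ Q i j, D a b}.ncard := by
            rw [← Set.ncard_coe_finset]
            exact Set.ncard_le_ncard (by intro ℓ; simp [junctions, path])
        _ ≤ (Q i j).ncard * d := ncard_setOf_meets_inNeighbourhood_le hin hS.2.1 _
        _ ≤ (2 * r + 2) * d := Nat.mul_le_mul_right d (hQcard i j he)
  · rw [← Set.ncard_coe_finset, ← SimpleGraph.avoidingSubgraph_verts J junctions]
    refine hfree _ (fun a b i j ℓ hij hab hb hℓ hℓi hℓj ha => ?_) (by simpa using hA)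
    refine Finset.disjoint_left.1 hij.2.2.2 hℓ ?_
    simp only [junctions, path, Set.toFinset_ofPred, Sym2.mem_iff, not_or, Sym2.lift_mk,
      mem_filter, mem_univ, true_and]
    exact ⟨⟨hℓi, hℓj⟩, a, ha, b, hb, hab⟩

/-- Let `J` be an `r`-shallow minor of `G` via an `r`-shallow model `S`, represented by
a collection of paths `Q i j` (given by their vertex sets), each with at most `2r + 2`
vertices.  Fix an orientation `D` of `G` with all in-degrees at most `d`.  A junction in
a subgraph `J'` of `J` is a pair `((a,b), ij)` with `(a,b)` an arc of `D`, `ij` an edge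
of `J'`, `b ∈ Q i j` and `a ∈ S ℓ` for some vertex `ℓ` of `J'` other than `i, j`.  If
every junction-free subgraph of `J` has edge density at most `t`, then `J` has edge
density at most `e·t·((2r+2)d + 1)`. -/
theorem stmt16 {V W : Type*} [Fintype V] [Fintype W] [Nonempty W]
    (G : SimpleGraph V) (J : SimpleGraph W) (r d : ℕ) (t : ℝ) (ht : 0 ≤ t)
    (D : V → V → Prop)
    (hor : ∀ u v, G.Adj u v ↔ (D u v ∨ D v u))
    (hnot2 : ∀ u v, D u v → ¬ D v u)
    (hin : ∀ v, {u | D u v}.ncard ≤ d)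
    (S : W → Set V) (hS : ShallowModel r J G S)
    (Q : W → W → Set V) (hQsymm : ∀ i j, Q i j = Q j i)
    (hQcard : ∀ i j, J.Adj i j → (Q i j).ncard ≤ 2 * r + 2)
    (hfree : ∀ J' : J.Subgraph,
      (∀ a b i j ℓ, J'.Adj i j → D a b → b ∈ Q i j → ℓ ∈ J'.verts →
        ℓ ≠ i → ℓ ≠ j → a ∉ S ℓ) →
      J'.verts.Nonempty → (J'.edgeSet.ncard : ℝ) ≤ t * J'.verts.ncard) :
    (J.edgeSet.ncard : ℝ) ≤
      Real.exp 1 * t * (((2 * r + 2) * d : ℕ) + 1) * Fintype.card W :=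
  stmt16_general G J r d t D hin S hS Q hQsymm hQcard hfree
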